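/- Any two maximally delayed gflows (g,≺) and (g',≺') of the same open graph (G,I,O) induce the same partition into layers: for all k, V_k^≺ = V_k^{≺'}. In particular all maximally delayed gflows have the same depth. -/
import Mathlib


open Set

variable {V : Type*}

def oddN (G : SimpleGraph V) (K : Set V) : Set V :=
  {u | Odd {v | v ∈ K ∧ G.Adj u v}.ncard}

def IsSPO (lt : V → V → Prop) : Prop :=
  (∀ a, ¬ lt a a) ∧ (∀ a b c, lt a b → lt b c → lt a c)

def IsCausalFlow (G : SimpleGraph V) (I O : Set V) (g : V → V) (lt : V → V → Prop) : Prop :=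
  IsSPO lt ∧ (∀ i, i ∉ O → g i ∉ I) ∧ (∀ i, i ∉ O → lt i (g i)) ∧
  (∀ i, i ∉ O → ∀ j, G.Adj (g i) j → j = i ∨ lt i j) ∧
  (∀ i, i ∉ O → G.Adj (g i) i)

def IsGFlow (G : SimpleGraph V) (I O : Set V) (g : V → Set V) (lt : V → V → Prop) : Prop :=
  IsSPO lt ∧ (∀ i, i ∉ O → (g i).Nonempty ∧ g i ∩ I = ∅) ∧
  (∀ i, i ∉ O → ∀ j ∈ g i, lt i j) ∧
  (∀ i, i ∉ O → ∀ j ∈ oddN G (g i), j = i ∨ lt i j) ∧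
  (∀ i, i ∉ O → i ∈ oddN G (g i))

def maxSet (lt : V → V → Prop) (X : Set V) : Set V :=
  {u ∈ X | ∀ v ∈ X, ¬ lt u v}

def rest (lt : V → V → Prop) : ℕ → Set V
  | 0 => Set.univ
  | k+1 => rest lt k \ maxSet lt (rest lt k)

def layer (lt : V → V → Prop) (k : ℕ) : Set V := maxSet lt (rest lt k)

def cumul (lt : V → V → Prop) (k : ℕ) : Set V := Set.univ \ rest lt (k+1)

def MoreDelayed (lt lt' : V → V → Prop) : Prop :=
  (∀ k, (cumul lt' k).ncard ≤ (cumul lt k).ncard) ∧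
  ∃ k, (cumul lt' k).ncard < (cumul lt k).ncard

noncomputable def flowDepth (lt : V → V → Prop) : ℕ := sInf {d | layer lt (d+1) = ∅}

def MaxDelayedCausalFlow (G : SimpleGraph V) (I O : Set V) (g : V → V) (lt : V → V → Prop) : Prop :=
  IsCausalFlow G I O g lt ∧
  ∀ g' lt', IsCausalFlow G I O g' lt' → ¬ MoreDelayed lt' lt

def MaxDelayedGFlow (G : SimpleGraph V) (I O : Set V) (g : V → Set V) (lt : V → V → Prop) : Prop :=
  IsGFlow G I O g lt ∧
  ∀ g' lt', IsGFlow G I O g' lt' → ¬ MoreDelayed lt' lt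

-- ### auxiliary lemmas

lemma maxSet_nonempty [Fintype V] {lt : V → V → Prop} (hs : IsSPO lt)
    {X : Set V} (hX : X.Nonempty) : (maxSet lt X).Nonempty := by
  have : IsTrans V lt := ⟨fun a b c => hs.2 a b c⟩
  have : IsIrrefl V lt := ⟨hs.1⟩
  have wf : WellFounded (fun a b => lt b a) := by
    have : IsTrans V (fun a b => lt b a) := ⟨fun a b c h1 h2 => hs.2 c b a h2 h1⟩
    have : IsIrrefl V (fun a b => lt b a) := ⟨hs.1⟩
    exact Finite.wellFounded_of_trans_of_irrefl _
  obtain ⟨m, hm, hmin⟩ := wf.has_min X hX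
  exact ⟨m, hm, fun v hv hlt => hmin v hv hlt⟩

lemma rest_succ_subset (lt : V → V → Prop) (k : ℕ) : rest lt (k+1) ⊆ rest lt k :=
  diff_subset

lemma rest_antitone (lt : V → V → Prop) : Antitone (rest lt) :=
  antitone_nat_of_succ_le (fun k => rest_succ_subset lt k)

/-- every vertex leaves `rest` eventually -/
lemma rest_eventually_empty [Fintype V] {lt : V → V → Prop} (hs : IsSPO lt) (v : V) :
    ∃ k, v ∉ rest lt k := by
  by_contra hcon
  push_neg at hcon
  -- then rest lt k is nonempty for all k, so ncard strictly decreases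
  have key : ∀ k, (rest lt k).ncard + k ≤ Fintype.card V := by
    intro k
    induction k with
    | zero =>
      have := Set.ncard_le_ncard (subset_univ (rest lt 0)) (toFinite _)
      simpa [Set.ncard_univ] using this
    | succ k ih =>
      have hne : (maxSet lt (rest lt k)).Nonempty := maxSet_nonempty hs ⟨v, hcon k⟩
      have hsub : maxSet lt (rest lt k) ⊆ rest lt k := fun u hu => hu.1
      have : (rest lt (k+1)).ncard < (rest lt k).ncard := by
        apply Set.ncard_lt_ncard _ (toFinite _)
        constructor
        · exact diff_subset
        · intro hsup
          obtain ⟨m, hm⟩ := hne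
          exact (hsup (hsub hm)).2 hm
      omega
  have h1 := key (Fintype.card V + 1)
  have h2 : v ∈ rest lt (Fintype.card V + 1) := hcon _
  have h3 := (Set.ncard_pos (toFinite _)).mpr ⟨v, h2⟩
  omega

noncomputable def rnk [Fintype V] (lt : V → V → Prop) (v : V) : ℕ :=
  sInf {k | v ∉ rest lt (k+1)}

lemma mem_rest_iff [Fintype V] {lt : V → V → Prop} (hs : IsSPO lt) (v : V) (k : ℕ) :
    v ∈ rest lt k ↔ k ≤ rnk lt v := by
  obtain ⟨m, hm⟩ := rest_eventually_empty hs v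
  have hne : {k | v ∉ rest lt (k+1)}.Nonempty := ⟨m, fun hv => hm (rest_antitone lt (Nat.le_succ m) hv)⟩
  constructor
  · intro hv
    by_contra hle
    push_neg at hle
    have : rnk lt v ∈ {k | v ∉ rest lt (k+1)} := Nat.sInf_mem hne
    exact this (rest_antitone lt hle hv)
  · intro hk
    cases k with
    | zero => trivial
    | succ k =>
      by_contra hv
      have : rnk lt v ≤ k := Nat.sInf_le hv
      omega

lemma mem_layer_rnk [Fintype V] {lt : V → V → Prop} (hs : IsSPO lt) (v : V) :
    v ∈ layer lt (rnk lt v) := by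
  have h1 : v ∈ rest lt (rnk lt v) := (mem_rest_iff hs v _).2 le_rfl
  have h2 : v ∉ rest lt (rnk lt v + 1) := fun hv => by
    have := (mem_rest_iff hs v _).1 hv; omega
  simp only [rest] at h2
  rcases (not_and_or.mp (fun hc : v ∈ rest lt (rnk lt v) ∧ v ∉ maxSet lt (rest lt (rnk lt v)) => h2 ⟨hc.1, hc.2⟩)) with h | h
  · exact absurd h1 h
  · exact not_not.mp h

lemma layer_eq_rnk [Fintype V] {lt : V → V → Prop} (hs : IsSPO lt) (k : ℕ) :
    layer lt k = {v | rnk lt v = k} := by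
  ext v
  constructor
  · intro hv
    have h1 : v ∈ rest lt k := hv.1
    have h2 : v ∉ rest lt (k+1) := fun hc => hc.2 hv
    have := (mem_rest_iff hs v k).1 h1
    have : ¬ (k + 1 ≤ rnk lt v) := fun hc => h2 ((mem_rest_iff hs v _).2 hc)
    simp only [mem_setOf_eq]; omega
  · intro hv
    simp only [mem_setOf_eq] at hv
    subst hv
    exact mem_layer_rnk hs v

lemma rnk_lt_of_lt [Fintype V] {lt : V → V → Prop} (hs : IsSPO lt) {a b : V}
    (hab : lt a b) : rnk lt b < rnk lt a := by
  by_contra hc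
  push_neg at hc
  have hb : b ∈ rest lt (rnk lt a) := (mem_rest_iff hs b _).2 hc
  have ha : a ∈ layer lt (rnk lt a) := mem_layer_rnk hs a
  exact ha.2 b hb hab

lemma cumul_eq_rnk [Fintype V] {lt : V → V → Prop} (hs : IsSPO lt) (k : ℕ) :
    cumul lt k = {v | rnk lt v ≤ k} := by
  ext v
  simp only [cumul, mem_diff, mem_univ, true_and, mem_setOf_eq, mem_rest_iff hs v (k+1)]
  omega

section Combine

variable [Fintype V] {lt lt' : V → V → Prop}

/-- the combined order: compare min-ranks -/
def combOrd (lt lt' : V → V → Prop) [Fintype V] : V → V → Prop :=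
  fun a b => min (rnk lt b) (rnk lt' b) < min (rnk lt a) (rnk lt' a)

lemma combOrd_spo : IsSPO (combOrd lt lt') :=
  ⟨fun a => lt_irrefl _, fun a b c h1 h2 => h2.trans h1⟩

lemma isGFlow_comb {G : SimpleGraph V} {I O : Set V} {g g' : V → Set V}
    (hg : IsGFlow G I O g lt) (hg' : IsGFlow G I O g' lt') :
    IsGFlow G I O (fun i => if rnk lt i ≤ rnk lt' i then g i else g' i) (combOrd lt lt') := by
  obtain ⟨hs, hne, hlt, hodd, hoddi⟩ := hg
  obtain ⟨hs', hne', hlt', hodd', hoddi'⟩ := hg'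
  refine ⟨combOrd_spo, ?_, ?_, ?_, ?_⟩
  · intro i hi; dsimp only; split <;> [exact hne i hi; exact hne' i hi]
  · intro i hi j hj
    by_cases hc : rnk lt i ≤ rnk lt' i
    · simp only [if_pos hc] at hj
      have := rnk_lt_of_lt hs (hlt i hi j hj)
      unfold combOrd; omega
    · simp only [if_neg hc] at hj
      have := rnk_lt_of_lt hs' (hlt' i hi j hj)
      unfold combOrd; omega
  · intro i hi j hj
    by_cases hc : rnk lt i ≤ rnk lt' i
    · simp only [if_pos hc] at hj
      rcases hodd i hi j hj with he | he
      · exact Or.inl he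
      · have := rnk_lt_of_lt hs he
        right; unfold combOrd; omega
    · simp only [if_neg hc] at hj
      rcases hodd' i hi j hj with he | he
      · exact Or.inl he
      · have := rnk_lt_of_lt hs' he
        right; unfold combOrd; omega
  · intro i hi
    by_cases hc : rnk lt i ≤ rnk lt' i
    · simp only [if_pos hc]; exact hoddi i hi
    · simp only [if_neg hc]; exact hoddi' i hi

lemma rest_comb_subset (lt lt' : V → V → Prop) (k : ℕ) :
    rest (combOrd lt lt') k ⊆ {v | k ≤ min (rnk lt v) (rnk lt' v)} := by
  induction k with
  | zero => intro v _; simp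
  | succ k ih =>
    intro v hv
    have h1 : k ≤ min (rnk lt v) (rnk lt' v) := ih hv.1
    have h2 : v ∉ maxSet (combOrd lt lt') (rest (combOrd lt lt') k) := hv.2
    simp only [maxSet, mem_setOf_eq, not_and, not_forall, not_not] at h2
    obtain ⟨b, hb, hlt⟩ := h2 hv.1
    have := ih hb
    simp only [mem_setOf_eq] at this ⊢
    unfold combOrd at hlt
    omega

lemma cumul_subset_comb (hs : IsSPO lt) (hs' : IsSPO lt') (k : ℕ) :
    cumul lt k ∪ cumul lt' k ⊆ cumul (combOrd lt lt') k := by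
  intro v hv
  have hρ : min (rnk lt v) (rnk lt' v) ≤ k := by
    rcases hv with hv | hv
    · rw [cumul_eq_rnk hs] at hv; simp only [mem_setOf_eq] at hv; omega
    · rw [cumul_eq_rnk hs'] at hv; simp only [mem_setOf_eq] at hv; omega
  rw [cumul_eq_rnk combOrd_spo]
  simp only [mem_setOf_eq]
  by_contra hc
  push_neg at hc
  have : v ∈ rest (combOrd lt lt') (k+1) := (mem_rest_iff combOrd_spo v _).2 hc
  have := rest_comb_subset lt lt' (k+1) this
  simp only [mem_setOf_eq] at this
  omega

end Combine

lemma layer_eq_rest_diff (lt : V → V → Prop) (k : ℕ) :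
    layer lt k = rest lt k \ rest lt (k+1) := by
  have hsub : maxSet lt (rest lt k) ⊆ rest lt k := fun u hu => hu.1
  show maxSet lt (rest lt k) = rest lt k \ (rest lt k \ maxSet lt (rest lt k))
  rw [Set.diff_diff_cancel_left hsub]

theorem max_delayed_gflows_same_layers {V : Type*} [Fintype V] (G : SimpleGraph V)
    (I O : Set V) (g g' : V → Set V) (lt lt' : V → V → Prop)
    (h : MaxDelayedGFlow G I O g lt) (h' : MaxDelayedGFlow G I O g' lt') :
    (∀ k, layer lt k = layer lt' k) ∧ flowDepth lt = flowDepth lt' := by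
  have hs : IsSPO lt := h.1.1
  have hs' : IsSPO lt' := h'.1.1
  have hcomb := isGFlow_comb h.1 h'.1
  -- the combined gflow dominates both
  have hsub : ∀ k, cumul lt k ⊆ cumul (combOrd lt lt') k :=
    fun k => (subset_union_left).trans (cumul_subset_comb hs hs' k)
  have hsub' : ∀ k, cumul lt' k ⊆ cumul (combOrd lt lt') k :=
    fun k => (subset_union_right).trans (cumul_subset_comb hs hs' k)
  have hle : ∀ k, (cumul lt k).ncard ≤ (cumul (combOrd lt lt') k).ncard :=
    fun k => Set.ncard_le_ncard (hsub k) (toFinite _)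
  have hle' : ∀ k, (cumul lt' k).ncard ≤ (cumul (combOrd lt lt') k).ncard :=
    fun k => Set.ncard_le_ncard (hsub' k) (toFinite _)
  have hnmd := h.2 _ _ hcomb
  have hnmd' := h'.2 _ _ hcomb
  have heqc : ∀ k, cumul lt k = cumul (combOrd lt lt') k := by
    intro k
    refine Set.eq_of_subset_of_ncard_le (hsub k) ?_ (toFinite _)
    by_contra hc
    push_neg at hc
    exact hnmd ⟨hle, k, hc⟩
  have heqc' : ∀ k, cumul lt' k = cumul (combOrd lt lt') k := by
    intro k
    refine Set.eq_of_subset_of_ncard_le (hsub' k) ?_ (toFinite _)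
    by_contra hc
    push_neg at hc
    exact hnmd' ⟨hle', k, hc⟩
  have hcum : ∀ k, cumul lt k = cumul lt' k := fun k => (heqc k).trans (heqc' k).symm
  have hrest : ∀ k, rest lt k = rest lt' k := by
    intro k
    cases k with
    | zero => rfl
    | succ k =>
      have h1 : univ \ cumul lt k = rest lt (k+1) := by
        show univ \ (univ \ rest lt (k+1)) = rest lt (k+1)
        exact Set.diff_diff_cancel_left (subset_univ _)
      have h2 : univ \ cumul lt' k = rest lt' (k+1) := by
        show univ \ (univ \ rest lt' (k+1)) = rest lt' (k+1)
        exact Set.diff_diff_cancel_left (subset_univ _)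
      rw [← h1, ← h2, hcum k]
  have hlayer : ∀ k, layer lt k = layer lt' k := by
    intro k
    rw [layer_eq_rest_diff, layer_eq_rest_diff, hrest k, hrest (k+1)]
  refine ⟨hlayer, ?_⟩
  unfold flowDepth
  congr 1
  ext d
  simp only [mem_setOf_eq, hlayer (d+1)]
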